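/- arXiv:1704.05353 — 7 statements merged into one kernel-verified Lean document; each statement's English description precedes it below -/
import Mathlib

section
/- Coercivity of the energy density normal to the hyperboloids (Lemma 2.1): Let t > 0, x ∈ ℝ³ with t > |x|, write r = |x| and ρ = √(t² − r²). For v ∈ ℝ³ set v⁰ = √(1+|v|²) and let v_r = (x·v)/|x| denote the radial component of v (with v_r := 0 when x = 0). Then for every nonnegative measurable function f : ℝ³ → [0,∞] one has the inequality (of integrals in the extended sense) ∫_{ℝ³} f(v)·(t v⁰ − x·v)/ρ dv ≥ (t/(2ρ)) ∫_{ℝ³} f(v)·[ (1 − r/t)((v⁰)² + v_r²) + (|v|² − v_r²) + 1 ] · dv/v⁰. -/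
/-!
Everything happens pointwise in `v`. Writing `w = v⁰`, `u = v_r` and using `w² = 1 + |v|²` and
`x·v = r u`, the bracket `B = (1 - r/t)(w² + u²) + (|v|² - u²) + 1` satisfies
`t B = 2w (t w - r u) - r (w - u)²`, so `(t / 2ρ) B / w` falls short of `(t w - x·v) / ρ`
by `r (w - u)² / (2ρw) ≥ 0`.
-/

open MeasureTheory
open scoped ENNReal

noncomputable section

/-- `r = |x|`, the Euclidean norm of `x ∈ ℝ³`. -/
def rad (x : Fin 3 → ℝ) : ℝ := Real.sqrt (∑ i, (x i) ^ 2)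

/-- `v⁰ = √(1+|v|²)`. -/
def vzero (v : Fin 3 → ℝ) : ℝ := Real.sqrt (1 + ∑ i, (v i) ^ 2)

/-- Radial component `v_r = (x·v)/|x|` of `v`, set to `0` when `x = 0`. -/
def vrad (x v : Fin 3 → ℝ) : ℝ :=
  if x = 0 then 0 else (∑ i, x i * v i) / rad x

lemma rad_nonneg (x : Fin 3 → ℝ) : 0 ≤ rad x := Real.sqrt_nonneg _

lemma rad_eq_zero_iff {x : Fin 3 → ℝ} : rad x = 0 ↔ x = 0 := by
  rw [rad, Real.sqrt_eq_zero (by positivity),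
    Fintype.sum_eq_zero_iff_of_nonneg fun i => sq_nonneg (x i), funext_iff, funext_iff]
  simp

lemma rad_mul_vrad (x v : Fin 3 → ℝ) : rad x * vrad x v = ∑ i, x i * v i := by
  by_cases hx : x = 0
  · simp [vrad, hx]
  · rw [vrad, if_neg hx, mul_div_cancel₀ _ (rad_eq_zero_iff.not.mpr hx)]

lemma vzero_pos (v : Fin 3 → ℝ) : 0 < vzero v := Real.sqrt_pos.mpr (by positivity)

lemma vzero_sq (v : Fin 3 → ℝ) : vzero v ^ 2 = 1 + ∑ i, v i ^ 2 :=
  Real.sq_sqrt (by positivity)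

lemma mul_coercivity_bracket_eq {t r w u s : ℝ} (ht : t ≠ 0) (hws : w ^ 2 = 1 + s) :
    t * ((1 - r / t) * (w ^ 2 + u ^ 2) + (s - u ^ 2) + 1)
      = 2 * w * (t * w - r * u) - r * (w - u) ^ 2 := by
  rw [mul_add, mul_add, ← mul_assoc, mul_sub, mul_one, mul_div_cancel₀ r ht]
  linear_combination -t * hws

lemma coercivity_weight_le {t r ρ w u s : ℝ} (ht : t ≠ 0) (hr : 0 ≤ r) (hρ : 0 ≤ ρ)
    (hw : 0 < w) (hws : w ^ 2 = 1 + s) :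
    t / (2 * ρ) * (((1 - r / t) * (w ^ 2 + u ^ 2) + (s - u ^ 2) + 1) / w)
      ≤ (t * w - r * u) / ρ :=
  calc t / (2 * ρ) * (((1 - r / t) * (w ^ 2 + u ^ 2) + (s - u ^ 2) + 1) / w)
      = (t * ((1 - r / t) * (w ^ 2 + u ^ 2) + (s - u ^ 2) + 1)) / (2 * w) / ρ := by ring
    _ = ((t * w - r * u) - r * (w - u) ^ 2 / (2 * w)) / ρ := by
      rw [mul_coercivity_bracket_eq ht hws]
      field_simp
    _ ≤ (t * w - r * u) / ρ := div_le_div_of_nonneg_right (sub_le_self _ (by positivity)) hρ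

theorem coercivity_energy_density_general
    (t : ℝ) (x : Fin 3 → ℝ) (ht : 0 < t)
    (f : (Fin 3 → ℝ) → ℝ≥0∞) :
    (∫⁻ v : Fin 3 → ℝ, f v * ENNReal.ofReal
        ((t * vzero v - ∑ i, x i * v i) / Real.sqrt (t ^ 2 - rad x ^ 2)))
      ≥ ENNReal.ofReal (t / (2 * Real.sqrt (t ^ 2 - rad x ^ 2))) *
          ∫⁻ v : Fin 3 → ℝ, f v * ENNReal.ofReal
            (((1 - rad x / t) * ((vzero v) ^ 2 + (vrad x v) ^ 2)
                + ((∑ i, (v i) ^ 2) - (vrad x v) ^ 2) + 1) / vzero v) := by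
  rw [ge_iff_le, ← lintegral_const_mul' _ _ ENNReal.ofReal_ne_top]
  refine lintegral_mono fun v => ?_
  rw [mul_left_comm, ← ENNReal.ofReal_mul (by positivity), ← rad_mul_vrad]
  gcongr
  exact coercivity_weight_le ht.ne' (rad_nonneg x) (Real.sqrt_nonneg _) (vzero_pos v) (vzero_sq v)

/-- Lemma 2.1 (coercivity of the energy density normal to the hyperboloids): for `t > |x|`,
`ρ = √(t²−r²)`, and any nonnegative measurable `f`,
`∫ f(v)(t v⁰ − x·v)/ρ dv ≥ (t/(2ρ)) ∫ f(v)[(1−r/t)((v⁰)²+v_r²) + (|v|²−v_r²) + 1] dv/v⁰`. -/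
theorem coercivity_energy_density
    (t : ℝ) (x : Fin 3 → ℝ) (ht : 0 < t) (hx : rad x < t)
    (f : (Fin 3 → ℝ) → ℝ≥0∞) (hf : Measurable f) :
    (∫⁻ v : Fin 3 → ℝ, f v * ENNReal.ofReal
        ((t * vzero v - ∑ i, x i * v i) / Real.sqrt (t ^ 2 - rad x ^ 2)))
      ≥ ENNReal.ofReal (t / (2 * Real.sqrt (t ^ 2 - rad x ^ 2))) *
          ∫⁻ v : Fin 3 → ℝ, f v * ENNReal.ofReal
            (((1 - rad x / t) * ((vzero v) ^ 2 + (vrad x v) ^ 2)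
                + ((∑ i, (v i) ^ 2) - (vrad x v) ^ 2) + 1) / vzero v) :=
  coercivity_energy_density_general t x ht f
end
end

section
/- Commutator of the perturbed transport operator with a generalized translation (Lemma 3.1, first identity): for every μ ∈ {0,1,2,3} and every smooth f(t,x,v), [𝐓_φ, 𝐞_μ] f = ∂_{x^μ}(∂_{xⁱ}φ)·V_i f + (∂_{x^μ}φ)·[ −(1/v⁰)·𝐞_0 f + 𝐓_φ f + 2 (∂_{xⁱ}φ)·V_i f ]. -/
noncomputable section

/-- Phase space point `(t, x, v)`. -/
abbrev Pt : Type := ℝ × (Fin 3 → ℝ) × (Fin 3 → ℝ)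

/-- Vertical derivative `V_i f = ∂_{vⁱ} f`. -/
def Vop (i : Fin 3) (f : Pt → ℝ) (p : Pt) : ℝ :=
  fderiv ℝ f p ((0 : ℝ), (0 : Fin 3 → ℝ), Pi.single i 1)

/-- `W f = vⁱ ∂_{vⁱ} f`. -/
def Wop (f : Pt → ℝ) (p : Pt) : ℝ := ∑ i, p.2.2 i * Vop i f p

/-- Derivative of a function of `(t,x)` in the constant spacetime direction `d`. -/
def Dphi (φ : ℝ × (Fin 3 → ℝ) → ℝ) (d : ℝ × (Fin 3 → ℝ)) (q : ℝ × (Fin 3 → ℝ)) : ℝ :=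
  fderiv ℝ φ q d

/-- `𝐓(φ) = v⁰ ∂_t φ + vⁱ ∂_{xⁱ} φ`, evaluated at a phase-space point. -/
def TphiFn (φ : ℝ × (Fin 3 → ℝ) → ℝ) (p : Pt) : ℝ :=
  vzero p.2.2 * Dphi φ ((1 : ℝ), (0 : Fin 3 → ℝ)) (p.1, p.2.1) +
    ∑ i, p.2.2 i * Dphi φ ((0 : ℝ), Pi.single i 1) (p.1, p.2.1)

/-- Free transport operator `𝐓 f = v⁰ ∂_t f + vⁱ ∂_{xⁱ} f`. -/
def Tfree (f : Pt → ℝ) (p : Pt) : ℝ :=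
  vzero p.2.2 * fderiv ℝ f p ((1 : ℝ), (0 : Fin 3 → ℝ), (0 : Fin 3 → ℝ)) +
    ∑ i, p.2.2 i * fderiv ℝ f p ((0 : ℝ), Pi.single i 1, (0 : Fin 3 → ℝ))

/-- Perturbed transport operator `𝐓_φ f = 𝐓 f − (𝐓(φ) vⁱ + ∂_{xⁱ}φ) ∂_{vⁱ} f`. -/
def Tpert (φ : ℝ × (Fin 3 → ℝ) → ℝ) (f : Pt → ℝ) (p : Pt) : ℝ :=
  Tfree f p -
    ∑ i, (TphiFn φ p * p.2.2 i + Dphi φ ((0 : ℝ), Pi.single i 1) (p.1, p.2.1)) * Vop i f p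

/-- Generalized translation `𝐞_d f = ∂_d f − (∂_d φ) · vⁱ ∂_{vⁱ} f` (spacetime direction `d`). -/
def eop (φ : ℝ × (Fin 3 → ℝ) → ℝ) (d : ℝ × (Fin 3 → ℝ)) (f : Pt → ℝ) (p : Pt) : ℝ :=
  fderiv ℝ f p (d.1, d.2, (0 : Fin 3 → ℝ)) - Dphi φ d (p.1, p.2.1) * Wop f p

/-- The coordinate direction `∂_{x^μ}`, `μ ∈ {0,1,2,3}`, with `x⁰ = t`. -/
def dir4 (μ : Fin 4) : ℝ × (Fin 3 → ℝ) :=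
  if _h : (μ : ℕ) = 0 then ((1 : ℝ), (0 : Fin 3 → ℝ))
  else ((0 : ℝ), Pi.single (⟨(μ : ℕ) - 1, by have := μ.isLt; omega⟩ : Fin 3) 1)


/-!
Both operators are derivations along vector fields on phase space: `𝐓_φ f = df(X)` and
`𝐞_d f = df(Y_d)` with `X = (v⁰, v, -(𝐓(φ) v + ∇ₓφ))` and `Y_d = (d, -(∂_d φ) v)`.
By the symmetry of the second derivative of `f`, their commutator is the derivation along
the Lie bracket `[X, Y_d] = DY_d · X - DX · Y_d`, so the identity reduces to computing this
bracket, which only needs the symmetry of the Hessian of `φ` and `(v⁰)² = 1 + |v|²`.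
-/

open VectorField

lemma clm_apply_phaseSpace_mk (L : Pt →L[ℝ] ℝ) (a : ℝ) (b c : Fin 3 → ℝ) :
    L (a, b, c) = a * L (1, 0, 0) + ∑ i, b i * L (0, Pi.single i 1, 0)
      + ∑ i, c i * L (0, 0, Pi.single i 1) := by
  have : ((a, b, c) : Pt) = a • (1, 0, 0)
      + ∑ i, b i • ((0 : ℝ), Pi.single i (1 : ℝ), (0 : Fin 3 → ℝ))
      + ∑ i, c i • ((0 : ℝ), (0 : Fin 3 → ℝ), Pi.single i (1 : ℝ)) := by
    ext <;> simp [Prod.fst_sum, Prod.snd_sum, Finset.sum_apply, Pi.single_apply]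
  rw [this]
  simp only [map_add, map_sum, map_smul, smul_eq_mul]

lemma Dphi_spacetime_mk (g : ℝ × (Fin 3 → ℝ) → ℝ) (a : ℝ) (b : Fin 3 → ℝ)
    (x : ℝ × (Fin 3 → ℝ)) :
    Dphi g (a, b) x = a * Dphi g (1, 0) x + ∑ i, b i * Dphi g (0, Pi.single i 1) x := by
  have : ((a, b) : ℝ × (Fin 3 → ℝ)) = a • (1, 0) + ∑ i, b i • ((0 : ℝ), Pi.single i (1 : ℝ)) := by
    ext <;> simp [Prod.fst_sum, Prod.snd_sum, Finset.sum_apply, Pi.single_apply]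
  rw [Dphi, this]
  simp only [map_add, map_sum, map_smul, smul_eq_mul, Dphi]

def transportField (φ : ℝ × (Fin 3 → ℝ) → ℝ) (q : Pt) : Pt :=
  (vzero q.2.2, q.2.2,
    fun i => -(TphiFn φ q * q.2.2 i + Dphi φ (0, Pi.single i 1) (q.1, q.2.1)))

def translationField (φ : ℝ × (Fin 3 → ℝ) → ℝ) (d : ℝ × (Fin 3 → ℝ)) (q : Pt) : Pt :=
  (d.1, d.2, fun i => -(Dphi φ d (q.1, q.2.1) * q.2.2 i))

lemma Tpert_eq_fderiv_transportField (φ : ℝ × (Fin 3 → ℝ) → ℝ) (f : Pt → ℝ) :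
    Tpert φ f = fun q => fderiv ℝ f q (transportField φ q) := by
  ext q
  rw [transportField, clm_apply_phaseSpace_mk, Tpert, Tfree]
  simp only [Vop, neg_mul, Finset.sum_neg_distrib, ← sub_eq_add_neg]

lemma eop_eq_fderiv_translationField (φ : ℝ × (Fin 3 → ℝ) → ℝ) (d : ℝ × (Fin 3 → ℝ))
    (f : Pt → ℝ) : eop φ d f = fun q => fderiv ℝ f q (translationField φ d q) := by
  ext q
  rw [eop, translationField, clm_apply_phaseSpace_mk, clm_apply_phaseSpace_mk (a := d.1)]
  simp only [Wop, Vop, Finset.mul_sum, Pi.zero_apply, zero_mul, Finset.sum_const_zero, add_zero,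
    neg_mul, mul_assoc, Finset.sum_neg_distrib, ← sub_eq_add_neg]

section Calculus

variable {φ : ℝ × (Fin 3 → ℝ) → ℝ}

lemma differentiable_vzero : Differentiable ℝ vzero :=
  fun _ => DifferentiableAt.sqrt (by fun_prop) (by positivity)

lemma differentiable_Dphi (hφ : ContDiff ℝ 2 φ) (d : ℝ × (Fin 3 → ℝ)) :
    Differentiable ℝ (Dphi φ d) :=
  fun x => ((hφ.fderiv_right (m := 1) (by norm_num)).differentiable one_ne_zero x).clm_apply
    (differentiableAt_const d)

lemma Dphi_Dphi_comm (hφ : ContDiff ℝ 2 φ) (a b x : ℝ × (Fin 3 → ℝ)) :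
    Dphi (Dphi φ a) b x = Dphi (Dphi φ b) a x := by
  have hsymm := hφ.contDiffAt.isSymmSndFDerivAt (x := x) (by simp)
  have hd := (hφ.fderiv_right (m := 1) (by norm_num)).differentiable one_ne_zero x
  change fderiv ℝ (fun q => fderiv ℝ φ q a) x b = fderiv ℝ (fun q => fderiv ℝ φ q b) x a
  simp only [fderiv_clm_apply hd (differentiableAt_const _)]
  simpa using hsymm b a

lemma differentiable_TphiFn (hφ : ContDiff ℝ 2 φ) : Differentiable ℝ (TphiFn φ) := by
  have := differentiable_Dphi hφ
  have := differentiable_vzero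
  unfold TphiFn
  fun_prop

lemma differentiable_transportField (hφ : ContDiff ℝ 2 φ) :
    Differentiable ℝ (transportField φ) := by
  have := differentiable_Dphi hφ
  have := differentiable_vzero
  have := differentiable_TphiFn hφ
  unfold transportField
  fun_prop

lemma differentiable_translationField (hφ : ContDiff ℝ 2 φ) (d : ℝ × (Fin 3 → ℝ)) :
    Differentiable ℝ (translationField φ d) := by
  have := differentiable_Dphi hφ
  unfold translationField
  fun_prop

lemma fderiv_velocity_coord_apply (i : Fin 3) (p u : Pt) :
    fderiv ℝ (fun q : Pt => q.2.2 i) p u = u.2.2 i := by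
  let c : Pt →L[ℝ] ℝ := (ContinuousLinearMap.proj i).comp
    ((ContinuousLinearMap.snd ℝ _ _).comp (ContinuousLinearMap.snd ℝ _ _))
  exact congrArg (· u) c.fderiv

lemma fderiv_vzero_velocity_apply (p u : Pt) :
    fderiv ℝ (fun q : Pt => vzero q.2.2) p u = (∑ i, p.2.2 i * u.2.2 i) / vzero p.2.2 := by
  unfold vzero
  rw [fderiv_sqrt (by fun_prop) (by positivity)]
  simp (disch := fun_prop) [fderiv_fun_sum, fderiv_fun_pow, fderiv_velocity_coord_apply, mul_assoc,
    ← Finset.mul_sum]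
  field_simp

lemma fderiv_Dphi_spacetime_apply (hφ : ContDiff ℝ 2 φ) (d : ℝ × (Fin 3 → ℝ)) (p u : Pt) :
    fderiv ℝ (fun q : Pt => Dphi φ d (q.1, q.2.1)) p u =
      Dphi (Dphi φ d) (u.1, u.2.1) (p.1, p.2.1) := by
  let π : Pt →L[ℝ] ℝ × (Fin 3 → ℝ) :=
    (ContinuousLinearMap.id ℝ ℝ).prodMap (ContinuousLinearMap.fst ℝ _ _)
  exact congrArg (· u) ((differentiable_Dphi hφ d _).hasFDerivAt.comp p π.hasFDerivAt).fderiv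

lemma fderiv_TphiFn_apply (hφ : ContDiff ℝ 2 φ) (p u : Pt) :
    fderiv ℝ (TphiFn φ) p u =
      vzero p.2.2 * Dphi (Dphi φ (1, 0)) (u.1, u.2.1) (p.1, p.2.1)
        + Dphi φ (1, 0) (p.1, p.2.1) * ((∑ i, p.2.2 i * u.2.2 i) / vzero p.2.2)
        + ∑ i, (p.2.2 i * Dphi (Dphi φ (0, Pi.single i 1)) (u.1, u.2.1) (p.1, p.2.1)
          + Dphi φ (0, Pi.single i 1) (p.1, p.2.1) * u.2.2 i) := by
  have := differentiable_Dphi hφ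
  have := differentiable_vzero
  unfold TphiFn
  simp (disch := fun_prop) only [fderiv_fun_add, fderiv_fun_mul, fderiv_fun_sum]
  simp [fderiv_vzero_velocity_apply, fderiv_velocity_coord_apply, fderiv_Dphi_spacetime_apply hφ]

lemma fderiv_translationField_apply (hφ : ContDiff ℝ 2 φ) (d : ℝ × (Fin 3 → ℝ)) (p u : Pt) :
    fderiv ℝ (translationField φ d) p u =
      (0, 0, fun i => -(Dphi (Dphi φ d) (u.1, u.2.1) (p.1, p.2.1) * p.2.2 i
        + Dphi φ d (p.1, p.2.1) * u.2.2 i)) := by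
  have := differentiable_Dphi hφ
  unfold translationField
  ext i <;> simp (disch := fun_prop) [DifferentiableAt.fderiv_prodMk, fderiv_pi, fderiv_fun_mul,
    fderiv_velocity_coord_apply, fderiv_Dphi_spacetime_apply hφ]
  ring

lemma fderiv_transportField_apply (hφ : ContDiff ℝ 2 φ) (p u : Pt) :
    fderiv ℝ (transportField φ) p u =
      ((∑ i, p.2.2 i * u.2.2 i) / vzero p.2.2, u.2.2,
        fun i => -(fderiv ℝ (TphiFn φ) p u * p.2.2 i + TphiFn φ p * u.2.2 i
          + Dphi (Dphi φ (0, Pi.single i 1)) (u.1, u.2.1) (p.1, p.2.1))) := by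
  have := differentiable_Dphi hφ
  have := differentiable_vzero
  have := differentiable_TphiFn hφ
  unfold transportField
  ext i <;> simp (disch := fun_prop) [DifferentiableAt.fderiv_prodMk, fderiv_pi, fderiv_fun_add,
    fderiv_fun_mul, fderiv_velocity_coord_apply, fderiv_vzero_velocity_apply,
    fderiv_Dphi_spacetime_apply hφ]
  ring

theorem lieBracket_transportField_translationField (hφ : ContDiff ℝ 2 φ)
    (d : ℝ × (Fin 3 → ℝ)) (p : Pt) :
    lieBracket ℝ (transportField φ) (translationField φ d) p =
      ∑ i, Dphi (Dphi φ (0, Pi.single i 1)) d (p.1, p.2.1) • ((0, 0, Pi.single i 1) : Pt)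
      + Dphi φ d (p.1, p.2.1) • (-(1 / vzero p.2.2) • translationField φ (1, 0) p
        + transportField φ p
        + (2 : ℝ) • ∑ i, Dphi φ (0, Pi.single i 1) (p.1, p.2.1)
          • ((0, 0, Pi.single i 1) : Pt)) := by
  have hsq : vzero p.2.2 ^ 2 = 1 + ∑ i, p.2.2 i ^ 2 := Real.sq_sqrt (by positivity)
  simp only [Fin.sum_univ_three] at hsq
  have hv : vzero p.2.2 ≠ 0 := (Real.sqrt_pos.2 (by positivity)).ne'
  have hDphiX : Dphi (Dphi φ d) (vzero p.2.2, p.2.2) (p.1, p.2.1) =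
      vzero p.2.2 * Dphi (Dphi φ (1, 0)) d (p.1, p.2.1)
        + ∑ i, p.2.2 i * Dphi (Dphi φ (0, Pi.single i 1)) d (p.1, p.2.1) := by
    rw [Dphi_spacetime_mk]
    simp only [Dphi_Dphi_comm hφ d]
  rw [lieBracket, fderiv_translationField_apply hφ, fderiv_transportField_apply hφ,
    fderiv_TphiFn_apply hφ]
  ext i
  · simp [transportField, translationField, Fin.sum_univ_three]
    linear_combination (norm := (field_simp; ring1)) (-Dphi φ d (p.1, p.2.1) / vzero p.2.2) * hsq
  · simp [transportField, translationField, Prod.snd_sum, Prod.fst_sum]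
  · simp only [transportField, TphiFn, neg_add_rev, hDphiX, translationField, mul_neg,
      Finset.sum_neg_distrib, Prod.mk.eta, neg_neg, Prod.mk_sub_mk, zero_sub, Pi.sub_apply,
      Prod.smul_mk, smul_eq_mul, mul_zero, smul_zero, one_div, neg_smul, mul_one, Prod.neg_mk,
      neg_zero, Prod.mk_add_mk, zero_add, smul_add, smul_neg, Prod.snd_add, Prod.snd_sum,
      Prod.smul_snd, Pi.add_apply, Finset.sum_apply, Pi.smul_apply, Pi.single_apply, mul_ite,
      Finset.sum_ite_eq, Finset.mem_univ, ↓reduceIte, Pi.neg_apply]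
    simp only [Fin.sum_univ_three]
    linear_combination (norm := (field_simp; ring1))
      (Dphi φ d (p.1, p.2.1) * Dphi φ (1, 0) (p.1, p.2.1) * p.2.2 i / vzero p.2.2) * hsq

end Calculus

/-- Lemma 3.1, first identity: commutator of the perturbed transport operator `𝐓_φ`
with a generalized translation `𝐞_μ`, for `μ ∈ {0,1,2,3}`. -/
theorem commutator_Tpert_generalizedTranslation
    (φ : ℝ × (Fin 3 → ℝ) → ℝ) (hφ : ContDiff ℝ (⊤ : ℕ∞) φ)
    (f : Pt → ℝ) (hf : ContDiff ℝ (⊤ : ℕ∞) f) (μ : Fin 4) (p : Pt) :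
    Tpert φ (eop φ (dir4 μ) f) p - eop φ (dir4 μ) (Tpert φ f) p =
      (∑ i, Dphi (fun q => Dphi φ ((0 : ℝ), Pi.single i 1) q) (dir4 μ) (p.1, p.2.1)
          * Vop i f p)
      + Dphi φ (dir4 μ) (p.1, p.2.1) *
          (-(1 / vzero p.2.2) * eop φ ((1 : ℝ), (0 : Fin 3 → ℝ)) f p + Tpert φ f p
            + 2 * ∑ i, Dphi φ ((0 : ℝ), Pi.single i 1) (p.1, p.2.1) * Vop i f p) := by
  have hφ2 : ContDiff ℝ 2 φ := hφ.of_le (by norm_cast)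
  simp only [Tpert_eq_fderiv_transportField, eop_eq_fderiv_translationField]
  rw [← fderiv_apply_lieBracket hf.contDiffAt
      (by rw [minSmoothness_of_isRCLikeNormedField]; norm_cast)
      (differentiable_translationField hφ2 _ p) (differentiable_transportField hφ2 p),
    lieBracket_transportField_translationField hφ2]
  simp only [map_add, map_sum, map_smul, smul_eq_mul, Vop]
end
end

section
/- Commutation of the rotation weights with the perturbed transport operator (Lemma 3.4, rotation case): fix i < j in {1,2,3} and let w(t,x,v) = xⁱ v^j − x^j vⁱ, the unnormalized weight associated to the rotation Ω_{ij} = xⁱ∂_{x^j} − x^j∂_{xⁱ}. Then at every point (t,x,v), 𝐓_φ(w) = −𝐓(φ)·w − ( xⁱ ∂_{x^j}φ − x^j ∂_{xⁱ}φ ), i.e. 𝐓_φ(Ω_{ij}^α v_α) = −𝐓(φ)·Ω_{ij}^α v_α − Ω_{ij}(φ). -/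
noncomputable section

/-! The weight `w = xⁱ v^j − x^j vⁱ` is an angular momentum, conserved along free straight lines,
so `𝐓 w = 0`. It is linear in `v` with `∂_{v^k} w = xⁱ δ_{jk} − x^j δ_{ik}`, so the force term of
`𝐓_φ` contracts to `𝐓(φ) w + (xⁱ ∂_{x^j} φ − x^j ∂_{xⁱ} φ)`. -/

def rotationWeight (i j : Fin 3) (q : Pt) : ℝ := q.2.1 i * q.2.2 j - q.2.1 j * q.2.2 i

theorem fderiv_rotationWeight_apply (i j : Fin 3) (p d : Pt) :
    fderiv ℝ (rotationWeight i j) p d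
      = d.2.1 i * p.2.2 j + p.2.1 i * d.2.2 j - (d.2.1 j * p.2.2 i + p.2.1 j * d.2.2 i) := by
  have hx (k : Fin 3) :=
    (hasFDerivAt_apply k p.2.1).comp p (hasFDerivAt_snd (𝕜 := ℝ) (p := p)).fst
  have hv (k : Fin 3) :=
    (hasFDerivAt_apply k p.2.2).comp p (hasFDerivAt_snd (𝕜 := ℝ) (p := p)).snd
  have hw : HasFDerivAt (rotationWeight i j) _ p := ((hx i).mul (hv j)).sub ((hx j).mul (hv i))
  rw [hw.fderiv]
  simp only [sub_apply, add_apply, smul_apply, smul_eq_mul, Function.comp_apply,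
    ContinuousLinearMap.comp_apply, ContinuousLinearMap.coe_fst', ContinuousLinearMap.coe_snd',
    ContinuousLinearMap.proj_apply]
  ring

theorem Tfree_rotationWeight (i j : Fin 3) (p : Pt) : Tfree (rotationWeight i j) p = 0 := by
  simp only [Tfree, fderiv_rotationWeight_apply, Pi.zero_apply, zero_mul, mul_zero, add_zero,
    zero_add, sub_self, Pi.single_apply, ite_mul, one_mul, mul_sub, mul_ite,
    Finset.sum_sub_distrib, Finset.sum_ite_eq, Finset.mem_univ, if_true]
  ring

theorem Vop_rotationWeight (i j k : Fin 3) (p : Pt) :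
    Vop k (rotationWeight i j) p
      = p.2.1 i * (Pi.single k 1 : Fin 3 → ℝ) j - p.2.1 j * (Pi.single k 1 : Fin 3 → ℝ) i := by
  simp only [Vop, fderiv_rotationWeight_apply, Pi.zero_apply, zero_mul, zero_add]

theorem Tpert_rotation_weight_general
    (φ : ℝ × (Fin 3 → ℝ) → ℝ)
    (i j : Fin 3) (p : Pt) :
    Tpert φ (fun q => q.2.1 i * q.2.2 j - q.2.1 j * q.2.2 i) p =
      -TphiFn φ p * (p.2.1 i * p.2.2 j - p.2.1 j * p.2.2 i)
        - (p.2.1 i * Dphi φ ((0 : ℝ), Pi.single j 1) (p.1, p.2.1)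
            - p.2.1 j * Dphi φ ((0 : ℝ), Pi.single i 1) (p.1, p.2.1)) := by
  change Tpert φ (rotationWeight i j) p = _
  simp only [Tpert, Tfree_rotationWeight, Vop_rotationWeight, Pi.single_apply, mul_ite, mul_one,
    mul_zero, mul_sub, Finset.sum_sub_distrib, Finset.sum_ite_eq, Finset.mem_univ, if_true]
  ring

/-- Lemma 3.4, rotation case: for the weight `w = xⁱ v^j − x^j vⁱ` associated to the rotation
`Ω_{ij} = xⁱ∂_{x^j} − x^j∂_{xⁱ}` (`i < j`), one has `𝐓_φ(w) = −𝐓(φ)·w − Ω_{ij}(φ)`. -/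
theorem Tpert_rotation_weight
    (φ : ℝ × (Fin 3 → ℝ) → ℝ) (hφ : ContDiff ℝ (⊤ : ℕ∞) φ)
    (i j : Fin 3) (hij : i < j) (p : Pt) :
    Tpert φ (fun q => q.2.1 i * q.2.2 j - q.2.1 j * q.2.2 i) p =
      -TphiFn φ p * (p.2.1 i * p.2.2 j - p.2.1 j * p.2.2 i)
        - (p.2.1 i * Dphi φ ((0 : ℝ), Pi.single j 1) (p.1, p.2.1)
            - p.2.1 j * Dphi φ ((0 : ℝ), Pi.single i 1) (p.1, p.2.1)) :=
  Tpert_rotation_weight_general φ i j p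
end
end

section
/- Commutators of boost fields built from generalized translations with generalized translations (Lemma 3.5, boost case): fix i ∈ {1,2,3} and define 𝐙_i = t·𝐞_i + xⁱ·𝐞_0 (the Lorentz boost with ordinary translations replaced by generalized translations). Then for every smooth f(t,x,v) and every j ∈ {1,2,3}: [𝐙_i, 𝐞_j] f = −δ_{ij}·𝐞_0 f and [𝐙_i, 𝐞_0] f = −𝐞_i f. -/
noncomputable section

/-- `𝐙_i = t·𝐞_i + xⁱ·𝐞_0`: the Lorentz boost with ordinary translations replaced
by generalized translations. -/
def Zb (φ : ℝ × (Fin 3 → ℝ) → ℝ) (i : Fin 3) (f : Pt → ℝ) (p : Pt) : ℝ :=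
  p.1 * eop φ ((0 : ℝ), Pi.single i 1) f p
    + p.2.1 i * eop φ ((1 : ℝ), (0 : Fin 3 → ℝ)) f p

/-! The generalized translations `𝐞_d = ∂_d − (∂_d φ) W`, with `W = vⁱ ∂_{vⁱ}`, commute pairwise:
`W` commutes with the spacetime derivatives `∂_d` and annihilates the `v`-independent coefficients
`∂_d φ`, so `[𝐞_c, 𝐞_d] = (∂_d ∂_c φ − ∂_c ∂_d φ) W = 0` by the symmetry of second derivatives.
Each `𝐞_d` is a derivation which acts on functions `c(t, x)` as `∂_d`, hence
`[c 𝐞_e, 𝐞_d] = −(∂_d c) 𝐞_e`; taking `c = t` and `c = xⁱ` gives the commutators of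
`𝐙_i = t 𝐞_i + xⁱ 𝐞_0`. -/

open scoped ContDiff

section DirDeriv

variable {E F : Type*} [NormedAddCommGroup E] [NormedSpace ℝ E]
  [NormedAddCommGroup F] [NormedSpace ℝ F]

def dirDeriv (w : E) (f : E → F) (p : E) : F := fderiv ℝ f p w

theorem contDiff_dirDeriv {f : E → F} (hf : ContDiff ℝ ∞ f) (w : E) :
    ContDiff ℝ ∞ (dirDeriv w f) :=
  (hf.fderiv_right le_rfl).clm_apply contDiff_const

theorem dirDeriv_dirDeriv {f : E → F} {p : E} (hf : DifferentiableAt ℝ (fderiv ℝ f) p)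
    (v w : E) : dirDeriv v (dirDeriv w f) p = fderiv ℝ (fderiv ℝ f) p v w := by
  change fderiv ℝ (fun q => fderiv ℝ f q w) p v = _
  rw [fderiv_clm_apply hf (differentiableAt_const w)]
  simp

theorem dirDeriv_comm {f : E → F} {p : E} (hf : ContDiffAt ℝ 2 f p) (v w : E) :
    dirDeriv v (dirDeriv w f) p = dirDeriv w (dirDeriv v f) p := by
  have hdf : DifferentiableAt ℝ (fderiv ℝ f) p :=
    (hf.fderiv_right (m := 1) le_rfl).differentiableAt one_ne_zero
  rw [dirDeriv_dirDeriv hdf, dirDeriv_dirDeriv hdf, (hf.isSymmSndFDerivAt (by simp)).eq]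

theorem dirDeriv_clm (L : E →L[ℝ] F) (w p : E) : dirDeriv w L p = L w := by
  simp [dirDeriv]

theorem dirDeriv_comp_clm {G : Type*} [NormedAddCommGroup G] [NormedSpace ℝ G]
    {h : G → F} (L : E →L[ℝ] G) {p : E} (hh : DifferentiableAt ℝ h (L p)) (w : E) :
    dirDeriv w (fun q => h (L q)) p = dirDeriv (L w) h (L p) := by
  simp [dirDeriv, fderiv_fun_comp p hh L.differentiableAt]

theorem dirDeriv_add {f g : E → F} {p : E} (hf : DifferentiableAt ℝ f p)
    (hg : DifferentiableAt ℝ g p) (w : E) :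
    dirDeriv w (fun q => f q + g q) p = dirDeriv w f p + dirDeriv w g p := by
  simp [dirDeriv, fderiv_fun_add hf hg]

theorem dirDeriv_sub {f g : E → F} {p : E} (hf : DifferentiableAt ℝ f p)
    (hg : DifferentiableAt ℝ g p) (w : E) :
    dirDeriv w (fun q => f q - g q) p = dirDeriv w f p - dirDeriv w g p := by
  simp [dirDeriv, fderiv_fun_sub hf hg]

theorem dirDeriv_sum {ι : Type*} (s : Finset ι) {f : ι → E → F} {p : E}
    (hf : ∀ k ∈ s, DifferentiableAt ℝ (f k) p) (w : E) :
    dirDeriv w (fun q => ∑ k ∈ s, f k q) p = ∑ k ∈ s, dirDeriv w (f k) p := by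
  simp [dirDeriv, fderiv_fun_sum hf]

theorem dirDeriv_mul {a b : E → ℝ} {p : E} (ha : DifferentiableAt ℝ a p)
    (hb : DifferentiableAt ℝ b p) (w : E) :
    dirDeriv w (fun q => a q * b q) p = dirDeriv w a p * b p + a p * dirDeriv w b p := by
  simp [dirDeriv, fderiv_fun_mul ha hb]
  ring

end DirDeriv

def spacetimeProj : Pt →L[ℝ] ℝ × (Fin 3 → ℝ) :=
  (ContinuousLinearMap.id ℝ ℝ).prodMap (ContinuousLinearMap.fst ℝ (Fin 3 → ℝ) (Fin 3 → ℝ))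

def horizontal (d : ℝ × (Fin 3 → ℝ)) : Pt := (d.1, d.2, 0)

theorem Vop_eq_dirDeriv (k : Fin 3) (f : Pt → ℝ) :
    Vop k f = dirDeriv ((0 : ℝ), (0 : Fin 3 → ℝ), Pi.single k 1) f := rfl

theorem eop_apply (φ : ℝ × (Fin 3 → ℝ) → ℝ) (d : ℝ × (Fin 3 → ℝ)) (f : Pt → ℝ) (p : Pt) :
    eop φ d f p = dirDeriv (horizontal d) f p - dirDeriv d φ (p.1, p.2.1) * Wop f p := rfl

theorem eop_def (φ : ℝ × (Fin 3 → ℝ) → ℝ) (d : ℝ × (Fin 3 → ℝ)) (f : Pt → ℝ) :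
    eop φ d f = fun q => dirDeriv (horizontal d) f q - dirDeriv d φ (q.1, q.2.1) * Wop f q := rfl

theorem contDiff_Wop {f : Pt → ℝ} (hf : ContDiff ℝ ∞ f) : ContDiff ℝ ∞ (Wop f) :=
  ContDiff.sum fun k _ => (contDiff_apply ℝ ℝ k |>.comp (contDiff_snd.comp contDiff_snd)).mul
    (contDiff_dirDeriv hf _)

theorem contDiff_eop {φ : ℝ × (Fin 3 → ℝ) → ℝ} (hφ : ContDiff ℝ ∞ φ) {f : Pt → ℝ}
    (hf : ContDiff ℝ ∞ f) (d : ℝ × (Fin 3 → ℝ)) : ContDiff ℝ ∞ (eop φ d f) :=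
  (contDiff_dirDeriv hf _).sub
    (((contDiff_dirDeriv hφ d).comp spacetimeProj.contDiff).mul (contDiff_Wop hf))

theorem DifferentiableAt.comp_spacetime {c : ℝ × (Fin 3 → ℝ) → ℝ} {p : Pt}
    (hc : DifferentiableAt ℝ c (p.1, p.2.1)) :
    DifferentiableAt ℝ (fun q : Pt => c (q.1, q.2.1)) p :=
  hc.comp p spacetimeProj.differentiableAt

theorem dirDeriv_spacetime {c : ℝ × (Fin 3 → ℝ) → ℝ} {p : Pt}
    (hc : DifferentiableAt ℝ c (p.1, p.2.1)) (w : Pt) :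
    dirDeriv w (fun q => c (q.1, q.2.1)) p = dirDeriv (w.1, w.2.1) c (p.1, p.2.1) :=
  dirDeriv_comp_clm spacetimeProj hc w

theorem dirDeriv_horizontal_spacetime {c : ℝ × (Fin 3 → ℝ) → ℝ} {p : Pt}
    (hc : DifferentiableAt ℝ c (p.1, p.2.1)) (d : ℝ × (Fin 3 → ℝ)) :
    dirDeriv (horizontal d) (fun q => c (q.1, q.2.1)) p = dirDeriv d c (p.1, p.2.1) :=
  dirDeriv_spacetime hc (horizontal d)

theorem dirDeriv_velocity (k : Fin 3) (w p : Pt) :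
    dirDeriv w (fun q : Pt => q.2.2 k) p = w.2.2 k :=
  dirDeriv_clm ((ContinuousLinearMap.proj k).comp
    ((ContinuousLinearMap.snd ℝ _ _).comp (ContinuousLinearMap.snd ℝ _ _))) w p

section Wop

variable {a b : Pt → ℝ} {p : Pt}

theorem Wop_add (ha : DifferentiableAt ℝ a p) (hb : DifferentiableAt ℝ b p) :
    Wop (fun q => a q + b q) p = Wop a p + Wop b p := by
  simp only [Wop, Vop_eq_dirDeriv, dirDeriv_add ha hb, mul_add, Finset.sum_add_distrib]

theorem Wop_sub (ha : DifferentiableAt ℝ a p) (hb : DifferentiableAt ℝ b p) :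
    Wop (fun q => a q - b q) p = Wop a p - Wop b p := by
  simp only [Wop, Vop_eq_dirDeriv, dirDeriv_sub ha hb, mul_sub, Finset.sum_sub_distrib]

theorem Wop_mul (ha : DifferentiableAt ℝ a p) (hb : DifferentiableAt ℝ b p) :
    Wop (fun q => a q * b q) p = Wop a p * b p + a p * Wop b p := by
  simp only [Wop, Vop_eq_dirDeriv, dirDeriv_mul ha hb, mul_add, Finset.sum_add_distrib,
    Finset.sum_mul, Finset.mul_sum]
  congr 1 <;> exact Finset.sum_congr rfl fun k _ => by ring

theorem Wop_spacetime {c : ℝ × (Fin 3 → ℝ) → ℝ} (hc : DifferentiableAt ℝ c (p.1, p.2.1)) :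
    Wop (fun q => c (q.1, q.2.1)) p = 0 := by
  have : ∀ k : Fin 3, Vop k (fun q => c (q.1, q.2.1)) p = 0 := fun k =>
    (dirDeriv_spacetime hc _).trans (by simp [dirDeriv, Prod.mk_zero_zero])
  simp [Wop, this]

end Wop

section GeneralizedTranslation

variable {φ : ℝ × (Fin 3 → ℝ) → ℝ} {f : Pt → ℝ}

theorem dirDeriv_horizontal_Wop (hf : ContDiff ℝ ∞ f) (d : ℝ × (Fin 3 → ℝ)) (p : Pt) :
    dirDeriv (horizontal d) (Wop f) p = Wop (dirDeriv (horizontal d) f) p := by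
  have hv : ∀ k : Fin 3, DifferentiableAt ℝ (fun q : Pt => q.2.2 k) p := by fun_prop
  have hVf : ∀ k : Fin 3, DifferentiableAt ℝ (Vop k f) p := fun k =>
    ((contDiff_dirDeriv hf _).differentiable (by simp)) p
  have hterm : ∀ k : Fin 3, dirDeriv (horizontal d) (fun q => q.2.2 k * Vop k f q) p
      = p.2.2 k * Vop k (dirDeriv (horizontal d) f) p := fun k => by
    rw [dirDeriv_mul (hv k) (hVf k), Vop_eq_dirDeriv, Vop_eq_dirDeriv,
      dirDeriv_comm (hf.contDiffAt.of_le ENat.LEInfty.out)]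
    simp [dirDeriv_velocity, horizontal]
  exact (dirDeriv_sum _ (fun k _ => (hv k).mul (hVf k)) _).trans
    (Finset.sum_congr rfl fun k _ => hterm k)

theorem Wop_eop (hφ : ContDiff ℝ ∞ φ) (hf : ContDiff ℝ ∞ f) (d : ℝ × (Fin 3 → ℝ)) (p : Pt) :
    Wop (eop φ d f) p
      = Wop (dirDeriv (horizontal d) f) p - dirDeriv d φ (p.1, p.2.1) * Wop (Wop f) p := by
  have hA : DifferentiableAt ℝ (dirDeriv d φ) (p.1, p.2.1) :=
    ((contDiff_dirDeriv hφ d).differentiable (by simp)) _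
  have hW : DifferentiableAt ℝ (Wop f) p := ((contDiff_Wop hf).differentiable (by simp)) p
  rw [eop_def, Wop_sub (((contDiff_dirDeriv hf _).differentiable (by simp)) p)
      (hA.comp_spacetime.fun_mul hW), Wop_mul hA.comp_spacetime hW, Wop_spacetime hA]
  ring

theorem dirDeriv_horizontal_eop (hφ : ContDiff ℝ ∞ φ) (hf : ContDiff ℝ ∞ f) (c d : ℝ × (Fin 3 → ℝ))
    (p : Pt) :
    dirDeriv (horizontal c) (eop φ d f) p
      = dirDeriv (horizontal c) (dirDeriv (horizontal d) f) p
        - dirDeriv c (dirDeriv d φ) (p.1, p.2.1) * Wop f p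
        - dirDeriv d φ (p.1, p.2.1) * Wop (dirDeriv (horizontal c) f) p := by
  have hA : DifferentiableAt ℝ (dirDeriv d φ) (p.1, p.2.1) :=
    ((contDiff_dirDeriv hφ d).differentiable (by simp)) _
  have hW : DifferentiableAt ℝ (Wop f) p := ((contDiff_Wop hf).differentiable (by simp)) p
  rw [eop_def, dirDeriv_sub (((contDiff_dirDeriv hf _).differentiable (by simp)) p)
    (hA.comp_spacetime.fun_mul hW), dirDeriv_mul hA.comp_spacetime hW,
    dirDeriv_horizontal_spacetime hA, dirDeriv_horizontal_Wop hf]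
  ring

theorem eop_comm (hφ : ContDiff ℝ ∞ φ) (hf : ContDiff ℝ ∞ f) (c d : ℝ × (Fin 3 → ℝ)) (p : Pt) :
    eop φ c (eop φ d f) p = eop φ d (eop φ c f) p := by
  rw [eop_apply φ c, eop_apply φ d, dirDeriv_horizontal_eop hφ hf, dirDeriv_horizontal_eop hφ hf,
    Wop_eop hφ hf, Wop_eop hφ hf, dirDeriv_comm (hf.contDiffAt.of_le ENat.LEInfty.out),
    dirDeriv_comm (hφ.contDiffAt.of_le ENat.LEInfty.out) c d]
  ring

theorem eop_add {a b : Pt → ℝ} {p : Pt} (ha : DifferentiableAt ℝ a p)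
    (hb : DifferentiableAt ℝ b p) (d : ℝ × (Fin 3 → ℝ)) :
    eop φ d (fun q => a q + b q) p = eop φ d a p + eop φ d b p := by
  rw [eop_apply, eop_apply, eop_apply, dirDeriv_add ha hb, Wop_add ha hb]
  ring

theorem eop_mul {a b : Pt → ℝ} {p : Pt} (ha : DifferentiableAt ℝ a p)
    (hb : DifferentiableAt ℝ b p) (d : ℝ × (Fin 3 → ℝ)) :
    eop φ d (fun q => a q * b q) p = eop φ d a p * b p + a p * eop φ d b p := by
  rw [eop_apply, eop_apply, eop_apply, dirDeriv_mul ha hb, Wop_mul ha hb]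
  ring

theorem eop_spacetime {c : ℝ × (Fin 3 → ℝ) → ℝ} {p : Pt}
    (hc : DifferentiableAt ℝ c (p.1, p.2.1)) (d : ℝ × (Fin 3 → ℝ)) :
    eop φ d (fun q => c (q.1, q.2.1)) p = dirDeriv d c (p.1, p.2.1) := by
  rw [eop_apply, dirDeriv_horizontal_spacetime hc, Wop_spacetime hc, mul_zero, sub_zero]

theorem spacetime_mul_eop_commutator (hφ : ContDiff ℝ ∞ φ) (hf : ContDiff ℝ ∞ f)
    {c : ℝ × (Fin 3 → ℝ) → ℝ} {p : Pt} (hc : DifferentiableAt ℝ c (p.1, p.2.1))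
    (d e : ℝ × (Fin 3 → ℝ)) :
    c (p.1, p.2.1) * eop φ e (eop φ d f) p - eop φ d (fun q => c (q.1, q.2.1) * eop φ e f q) p
      = -(dirDeriv d c (p.1, p.2.1) * eop φ e f p) := by
  rw [eop_mul hc.comp_spacetime (((contDiff_eop hφ hf e).differentiable (by simp)) p),
    eop_spacetime hc, eop_comm hφ hf e d]
  ring

theorem Zb_eop_commutator (hφ : ContDiff ℝ ∞ φ) (hf : ContDiff ℝ ∞ f) (i : Fin 3)
    (d : ℝ × (Fin 3 → ℝ)) (p : Pt) :
    Zb φ i (eop φ d f) p - eop φ d (Zb φ i f) p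
      = -(d.1 * eop φ ((0 : ℝ), Pi.single i 1) f p)
        - d.2 i * eop φ ((1 : ℝ), (0 : Fin 3 → ℝ)) f p := by
  have hE : ∀ e, DifferentiableAt ℝ (eop φ e f) p := fun e =>
    ((contDiff_eop hφ hf e).differentiable (by simp)) p
  have ht := spacetime_mul_eop_commutator hφ hf (c := Prod.fst) (p := p) differentiableAt_fst d
    ((0 : ℝ), Pi.single i 1)
  have hx := spacetime_mul_eop_commutator hφ hf (c := fun y => y.2 i) (p := p) (by fun_prop) d
    ((1 : ℝ), (0 : Fin 3 → ℝ))
  rw [show dirDeriv d Prod.fst (p.1, p.2.1) = d.1 from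
    dirDeriv_clm (ContinuousLinearMap.fst ℝ ℝ (Fin 3 → ℝ)) d _] at ht
  rw [show dirDeriv d (fun y => y.2 i) (p.1, p.2.1) = d.2 i from
    dirDeriv_clm ((ContinuousLinearMap.proj i).comp (ContinuousLinearMap.snd ℝ ℝ _)) d _] at hx
  unfold Zb
  rw [eop_add (differentiableAt_fst.fun_mul (hE _)) (by fun_prop)]
  linarith

end GeneralizedTranslation

/-- Lemma 3.5, boost case: `[𝐙_i, 𝐞_j] f = −δ_{ij}·𝐞_0 f` and `[𝐙_i, 𝐞_0] f = −𝐞_i f`. -/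
theorem commutator_Zb_generalizedTranslation
    (φ : ℝ × (Fin 3 → ℝ) → ℝ) (hφ : ContDiff ℝ (⊤ : ℕ∞) φ)
    (f : Pt → ℝ) (hf : ContDiff ℝ (⊤ : ℕ∞) f) (i : Fin 3) (p : Pt) :
    (∀ j : Fin 3,
      Zb φ i (eop φ ((0 : ℝ), Pi.single j 1) f) p
          - eop φ ((0 : ℝ), Pi.single j 1) (Zb φ i f) p
        = -(if i = j then (1 : ℝ) else 0) * eop φ ((1 : ℝ), (0 : Fin 3 → ℝ)) f p) ∧
    (Zb φ i (eop φ ((1 : ℝ), (0 : Fin 3 → ℝ)) f) p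
        - eop φ ((1 : ℝ), (0 : Fin 3 → ℝ)) (Zb φ i f) p
      = -eop φ ((0 : ℝ), Pi.single i 1) f p) := by
  refine ⟨fun j => ?_, ?_⟩
  · rw [Zb_eop_commutator hφ hf]
    by_cases h : i = j <;> simp [h]
  · rw [Zb_eop_commutator hφ hf]
    simp
end
end

section
/- Commutators of the fields 𝐗_i with generalized translations (Lemma 3.7): fix i ∈ {1,2,3} and define 𝐗_i = 𝐞_i + (vⁱ/v⁰)·𝐞_0. Then for every μ ∈ {0,1,2,3} and every smooth f(t,x,v): [𝐗_i, 𝐞_μ] f = (∂_{x^μ}φ)·(vⁱ/(v⁰)³)·𝐞_0 f; in particular [𝐗_i, 𝐞_μ] f equals ∂_{x^μ}φ times vⁱ/(v⁰)³ times 𝐞_0 f, since 𝐞_μ(vⁱ/v⁰) = −(∂_{x^μ}φ)·vⁱ/(v⁰)³. -/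
noncomputable section

/-- `𝐗_i = 𝐞_i + (vⁱ/v⁰)·𝐞_0`. -/
def Xop (φ : ℝ × (Fin 3 → ℝ) → ℝ) (i : Fin 3) (f : Pt → ℝ) (p : Pt) : ℝ :=
  eop φ ((0 : ℝ), Pi.single i 1) f p
    + (p.2.2 i / vzero p.2.2) * eop φ ((1 : ℝ), (0 : Fin 3 → ℝ)) f p

/-!
Each generalized translation is differentiation along a vector field on phase space,
`𝐞_d f = df(ξ_d)` with `ξ_d(t, x, v) = (d, -(∂_d φ) v)`, and `𝐗_i` is differentiation along
`ξ_i + v̂ⁱ ξ_0`, where `v̂ⁱ = vⁱ/v⁰`. Commutators of such derivations are derivations along Lie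
brackets. The fields `ξ_d` commute pairwise, because their brackets only involve the symmetric
second derivative of `φ`, so by the Leibniz rule `[ξ_i + v̂ⁱ ξ_0, ξ_μ] = -(𝐞_μ v̂ⁱ) ξ_0`.
Finally `v̂ⁱ` depends on `v` alone, so `𝐞_μ v̂ⁱ = -(∂_μ φ) vʲ ∂_{vʲ} v̂ⁱ = -(∂_μ φ) vⁱ/(v⁰)³`.
-/

namespace GeneralizedTranslation

open VectorField

def vhat (i : Fin 3) (v : Fin 3 → ℝ) : ℝ := v i / vzero v

lemma vzero_pos (v : Fin 3 → ℝ) : 0 < vzero v :=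
  Real.sqrt_pos.mpr (by positivity)

lemma vzero_sq (v : Fin 3 → ℝ) : vzero v ^ 2 = 1 + ∑ j, v j ^ 2 :=
  Real.sq_sqrt (by positivity)

lemma hasFDerivAt_vzero (v : Fin 3 → ℝ) :
    HasFDerivAt vzero
      ((vzero v)⁻¹ • ∑ j, v j • ContinuousLinearMap.proj j : (Fin 3 → ℝ) →L[ℝ] ℝ) v := by
  have hsq : HasFDerivAt (fun w : Fin 3 → ℝ => 1 + ∑ j, w j ^ 2)
      (∑ j, (2 * v j) • ContinuousLinearMap.proj j : (Fin 3 → ℝ) →L[ℝ] ℝ) v :=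
    (HasFDerivAt.fun_sum fun j _ =>
      ((hasFDerivAt_apply j v).pow 2).congr_fderiv (by ext; simp)).const_add 1
  refine (hsq.sqrt (by positivity)).congr_fderiv ?_
  ext u
  simp only [smul_apply, sum_apply, ContinuousLinearMap.proj_apply, smul_eq_mul,
    Finset.mul_sum, vzero]
  exact Finset.sum_congr rfl fun j _ => by ring

lemma hasFDerivAt_vhat (i : Fin 3) (v : Fin 3 → ℝ) :
    HasFDerivAt (vhat i)
      ((vzero v)⁻¹ • ContinuousLinearMap.proj i
        - (v i / vzero v ^ 3) • ∑ j, v j • ContinuousLinearMap.proj j : (Fin 3 → ℝ) →L[ℝ] ℝ)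
      v := by
  refine ((hasFDerivAt_apply i v).mul
    ((hasDerivAt_inv (vzero_pos v).ne').comp_hasFDerivAt v (hasFDerivAt_vzero v))).congr_fderiv ?_
  ext u
  simp only [add_apply, smul_apply, sum_apply, sub_apply, ContinuousLinearMap.proj_apply,
    Function.comp_apply, smul_eq_mul]
  ring

lemma fderiv_vhat_apply_self (i : Fin 3) (v : Fin 3 → ℝ) :
    fderiv ℝ (vhat i) v v = v i / vzero v ^ 3 := by
  have hv := (vzero_pos v).ne'
  have hnorm : ∑ j, v j * v j = vzero v ^ 2 - 1 := by
    rw [vzero_sq]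
    simp [sq]
  rw [(hasFDerivAt_vhat i v).fderiv]
  simp only [sub_apply, smul_apply, sum_apply, ContinuousLinearMap.proj_apply, smul_eq_mul]
  rw [hnorm]
  field_simp
  ring

def spacetimeProj : Pt →L[ℝ] ℝ × (Fin 3 → ℝ) :=
  (ContinuousLinearMap.fst ℝ ℝ _).prod
    (ContinuousLinearMap.fst ℝ _ _ ∘L ContinuousLinearMap.snd ℝ ℝ _)

@[simp] lemma spacetimeProj_apply (q : Pt) : spacetimeProj q = (q.1, q.2.1) := rfl

def velocityProj : Pt →L[ℝ] (Fin 3 → ℝ) :=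
  ContinuousLinearMap.snd ℝ _ _ ∘L ContinuousLinearMap.snd ℝ ℝ _

@[simp] lemma velocityProj_apply (q : Pt) : velocityProj q = q.2.2 := rfl

variable {φ : ℝ × (Fin 3 → ℝ) → ℝ}

def translationField (φ : ℝ × (Fin 3 → ℝ) → ℝ) (d : ℝ × (Fin 3 → ℝ)) (q : Pt) : Pt :=
  (d.1, d.2, -Dphi φ d (q.1, q.2.1) • q.2.2)

def xField (φ : ℝ × (Fin 3 → ℝ) → ℝ) (i : Fin 3) (q : Pt) : Pt :=
  translationField φ (0, Pi.single i 1) q + vhat i q.2.2 • translationField φ (1, 0) q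

lemma eop_eq_fderiv (φ : ℝ × (Fin 3 → ℝ) → ℝ) (d : ℝ × (Fin 3 → ℝ)) (f : Pt → ℝ) :
    eop φ d f = fun q => fderiv ℝ f q (translationField φ d q) := by
  funext q
  have hsplit : translationField φ d q = (d.1, d.2, 0)
      + (-Dphi φ d (q.1, q.2.1)) • ∑ j, q.2.2 j • ((0, 0, Pi.single j 1) : Pt) := by
    ext j <;> simp [translationField, Prod.fst_sum, Prod.snd_sum, Pi.single_apply]
  rw [hsplit, map_add, map_smul, map_sum]
  simp only [eop, Wop, Vop, map_smul, smul_eq_mul]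
  ring

lemma Xop_eq_fderiv (φ : ℝ × (Fin 3 → ℝ) → ℝ) (i : Fin 3) (f : Pt → ℝ) :
    Xop φ i f = fun q => fderiv ℝ f q (xField φ i q) := by
  funext q
  simp [Xop, xField, vhat, eop_eq_fderiv]

lemma hasFDerivAt_Dphi (hφ : ContDiff ℝ 2 φ) (d : ℝ × (Fin 3 → ℝ)) (p : Pt) :
    HasFDerivAt (fun q : Pt => Dphi φ d (q.1, q.2.1))
      ((fderiv ℝ (fderiv ℝ φ) (p.1, p.2.1)).flip d ∘L spacetimeProj) p := by
  have hφ' : HasFDerivAt (fderiv ℝ φ) (fderiv ℝ (fderiv ℝ φ) (p.1, p.2.1)) (p.1, p.2.1) :=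
    ((hφ.fderiv_right (m := 1) le_rfl).differentiable one_ne_zero _).hasFDerivAt
  exact ((hφ'.comp p spacetimeProj.hasFDerivAt).clm_apply (hasFDerivAt_const d p)).congr_fderiv
    (by ext u <;> simp)

lemma hasFDerivAt_translationField (hφ : ContDiff ℝ 2 φ) (d : ℝ × (Fin 3 → ℝ)) (p : Pt) :
    HasFDerivAt (translationField φ d)
      ((0 : Pt →L[ℝ] ℝ).prod ((0 : Pt →L[ℝ] (Fin 3 → ℝ)).prod
        (-Dphi φ d (p.1, p.2.1) • velocityProj
          + (-(fderiv ℝ (fderiv ℝ φ) (p.1, p.2.1)).flip d ∘L spacetimeProj).smulRight p.2.2))) p :=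
  (hasFDerivAt_const d.1 p).prodMk ((hasFDerivAt_const d.2 p).prodMk
    ((hasFDerivAt_Dphi hφ d p).fun_neg.smul velocityProj.hasFDerivAt))

lemma fderiv_translationField_apply (hφ : ContDiff ℝ 2 φ) (d : ℝ × (Fin 3 → ℝ)) (p u : Pt) :
    fderiv ℝ (translationField φ d) p u = (0, 0,
      -fderiv ℝ (fderiv ℝ φ) (p.1, p.2.1) (u.1, u.2.1) d • p.2.2
        - Dphi φ d (p.1, p.2.1) • u.2.2) := by
  rw [(hasFDerivAt_translationField hφ d p).fderiv]
  simp [sub_eq_add_neg, add_comm]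

lemma lieBracket_translationField (hφ : ContDiff ℝ 2 φ) (a b : ℝ × (Fin 3 → ℝ)) (p : Pt) :
    lieBracket ℝ (translationField φ a) (translationField φ b) p = 0 := by
  have hsymm : IsSymmSndFDerivAt ℝ φ (p.1, p.2.1) := hφ.contDiffAt.isSymmSndFDerivAt (by simp)
  simp [lieBracket, fderiv_translationField_apply hφ, translationField, hsymm a b, smul_smul,
    mul_comm]

lemma hasFDerivAt_vhat_comp_velocityProj (i : Fin 3) (p : Pt) :
    HasFDerivAt (fun q : Pt => vhat i q.2.2) (fderiv ℝ (vhat i) p.2.2 ∘L velocityProj) p :=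
  HasFDerivAt.comp (g := vhat i) p (hasFDerivAt_vhat i p.2.2).differentiableAt.hasFDerivAt
    velocityProj.hasFDerivAt

lemma eop_vhat (φ : ℝ × (Fin 3 → ℝ) → ℝ) (d : ℝ × (Fin 3 → ℝ)) (i : Fin 3) (p : Pt) :
    eop φ d (fun q : Pt => vhat i q.2.2) p
      = -Dphi φ d (p.1, p.2.1) * (p.2.2 i / vzero p.2.2 ^ 3) := by
  simp only [eop_eq_fderiv, (hasFDerivAt_vhat_comp_velocityProj i p).fderiv,
    ContinuousLinearMap.comp_apply, velocityProj_apply, translationField, map_smul,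
    fderiv_vhat_apply_self, smul_eq_mul]

lemma differentiableAt_xField (hφ : ContDiff ℝ 2 φ) (i : Fin 3) (p : Pt) :
    DifferentiableAt ℝ (xField φ i) p :=
  (hasFDerivAt_translationField hφ _ p).differentiableAt.add
    ((hasFDerivAt_vhat_comp_velocityProj i p).differentiableAt.smul
      (hasFDerivAt_translationField hφ _ p).differentiableAt)

lemma lieBracket_xField_translationField (hφ : ContDiff ℝ 2 φ) (i : Fin 3)
    (d : ℝ × (Fin 3 → ℝ)) (p : Pt) :
    lieBracket ℝ (xField φ i) (translationField φ d) p
      = -eop φ d (fun q : Pt => vhat i q.2.2) p • translationField φ (1, 0) p := by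
  have hT (a : ℝ × (Fin 3 → ℝ)) : DifferentiableAt ℝ (translationField φ a) p :=
    (hasFDerivAt_translationField hφ a p).differentiableAt
  have hv := (hasFDerivAt_vhat_comp_velocityProj i p).differentiableAt
  have hsplit : xField φ i = translationField φ (0, Pi.single i 1)
      + fun q => vhat i q.2.2 • translationField φ (1, 0) q := rfl
  rw [hsplit, lieBracket_add_left (V₁ := fun q => vhat i q.2.2 • translationField φ (1, 0) q)
      (hT _) (hv.smul (hT _)),
    lieBracket_smul_left hv (hT _), lieBracket_translationField hφ,
    lieBracket_translationField hφ, smul_zero, add_zero, zero_add, eop_eq_fderiv]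

lemma Xop_eop_sub_eop_Xop {f : Pt → ℝ} (hφ : ContDiff ℝ 2 φ) (hf : ContDiff ℝ 2 f)
    (i : Fin 3) (d : ℝ × (Fin 3 → ℝ)) (p : Pt) :
    Xop φ i (eop φ d f) p - eop φ d (Xop φ i f) p
      = -eop φ d (fun q : Pt => vhat i q.2.2) p * eop φ (1, 0) f p :=
  calc Xop φ i (eop φ d f) p - eop φ d (Xop φ i f) p
      = fderiv ℝ (fun q => fderiv ℝ f q (translationField φ d q)) p (xField φ i p)
          - fderiv ℝ (fun q => fderiv ℝ f q (xField φ i q)) p (translationField φ d p) := by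
        rw [Xop_eq_fderiv, eop_eq_fderiv φ d, eop_eq_fderiv φ d, Xop_eq_fderiv]
    _ = fderiv ℝ f p (lieBracket ℝ (xField φ i) (translationField φ d) p) :=
        (fderiv_apply_lieBracket hf.contDiffAt (by simp)
          (hasFDerivAt_translationField hφ d p).differentiableAt
          (differentiableAt_xField hφ i p)).symm
    _ = _ := by
        rw [lieBracket_xField_translationField hφ, map_smul, smul_eq_mul,
          eop_eq_fderiv φ (1, 0) f]

end GeneralizedTranslation

/-- Lemma 3.7: `[𝐗_i, 𝐞_μ] f = (∂_{x^μ}φ)·(vⁱ/(v⁰)³)·𝐞_0 f`, which holds since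
`𝐞_μ(vⁱ/v⁰) = −(∂_{x^μ}φ)·vⁱ/(v⁰)³`. -/
theorem commutator_X_generalizedTranslation
    (φ : ℝ × (Fin 3 → ℝ) → ℝ) (hφ : ContDiff ℝ (⊤ : ℕ∞) φ)
    (f : Pt → ℝ) (hf : ContDiff ℝ (⊤ : ℕ∞) f) (i : Fin 3) (μ : Fin 4) (p : Pt) :
    (Xop φ i (eop φ (dir4 μ) f) p - eop φ (dir4 μ) (Xop φ i f) p
      = Dphi φ (dir4 μ) (p.1, p.2.1) * (p.2.2 i / (vzero p.2.2) ^ 3)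
          * eop φ ((1 : ℝ), (0 : Fin 3 → ℝ)) f p) ∧
    (eop φ (dir4 μ) (fun q => q.2.2 i / vzero q.2.2) p
      = -(Dphi φ (dir4 μ) (p.1, p.2.1)) * (p.2.2 i / (vzero p.2.2) ^ 3)) := by
  have hφ₂ : ContDiff ℝ 2 φ := hφ.of_le (WithTop.coe_le_coe.mpr le_top)
  have hf₂ : ContDiff ℝ 2 f := hf.of_le (WithTop.coe_le_coe.mpr le_top)
  refine ⟨?_, GeneralizedTranslation.eop_vhat φ (dir4 μ) i p⟩
  rw [GeneralizedTranslation.Xop_eop_sub_eop_Xop hφ₂ hf₂, GeneralizedTranslation.eop_vhat]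
  ring
end
end

section
/- Lower bounds for the hyperboloidal momentum weight (Lemma 6.2): let (t,x) ∈ ℝ × ℝ³ satisfy t ≥ √(1+|x|²) (so (t,x) lies in the future J⁺(H₁) of the unit hyperboloid), set ρ = √(t² − |x|²) and u = t − |x|, and for v ∈ ℝ³ set v⁰ = √(1+|v|²) and v^ρ = (t v⁰ − x·v)/ρ. Then the following three inequalities hold: (i) v^ρ ≥ 1; (ii) v^ρ ≥ (u/(2ρ))·v⁰; (iii) v^ρ ≥ t/(2ρ v⁰). -/
/-!
Write `r = |x|`, `w = |v|`, so that `v⁰ = √(1 + w²)` and `ρ = √(t² − r²)`. By Cauchy–Schwarz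
`x·v ≤ r w`, so `ρ v^ρ ≥ t v⁰ − r w`, and all three bounds reduce to inequalities between the
four scalars `t ≥ r ≥ 0` and `v⁰ ≥ w ≥ 0`. Bound (i) is the reverse Cauchy–Schwarz inequality
for the future timelike vectors `(t, r)` and `(v⁰, w)` of `ℝ^{1+1}`, whose Minkowski lengths are
`ρ` and `1`; (ii) uses `w ≤ v⁰`; (iii) uses `t v⁰ − r w ≥ t (v⁰ − w) = t / (v⁰ + w) ≥ t / (2 v⁰)`.
-/

noncomputable section

/-- Hyperboloidal time `ρ = √(t² − |x|²)`. -/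
def hrho (t : ℝ) (x : Fin 3 → ℝ) : ℝ := Real.sqrt (t ^ 2 - ∑ i, (x i) ^ 2)

/-- `v^ρ = (t v⁰ − x·v)/ρ`, the contraction of the momentum with the future unit normal
to the hyperboloid through `(t,x)`. -/
def vrho (t : ℝ) (x v : Fin 3 → ℝ) : ℝ :=
  (t * vzero v - ∑ i, x i * v i) / hrho t x

open Finset

theorem Real.sqrt_sq_sub_sq_mul_sqrt_sq_sub_sq_le {t r s w : ℝ} (hr : 0 ≤ r) (hrt : r ≤ t)
    (hw : 0 ≤ w) (hws : w ≤ s) :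
    √(t ^ 2 - r ^ 2) * √(s ^ 2 - w ^ 2) ≤ t * s - r * w := by
  rw [← Real.sqrt_mul (by nlinarith), Real.sqrt_le_iff]
  constructor
  · nlinarith [mul_le_mul hrt hws hw (hr.trans hrt)]
  · nlinarith [sq_nonneg (t * w - r * s)]

theorem le_two_mul_mul_sub_mul_of_sq_eq_one_add_sq {t r s w : ℝ} (hr : 0 ≤ r) (hrt : r ≤ t)
    (hw : 0 ≤ w) (hs : 0 ≤ s) (hsw : s ^ 2 = 1 + w ^ 2) :
    t ≤ 2 * s * (t * s - r * w) := by
  have hws : w ≤ s := by nlinarith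
  have h2s : 1 ≤ 2 * s * (s - w) := by nlinarith
  nlinarith [mul_le_mul_of_nonneg_left hrt (mul_nonneg (mul_nonneg zero_le_two hs) hw)]

theorem sq_rad (x : Fin 3 → ℝ) : rad x ^ 2 = ∑ i, x i ^ 2 :=
  Real.sq_sqrt (sum_nonneg fun i _ => sq_nonneg (x i))

theorem sq_vzero (v : Fin 3 → ℝ) : vzero v ^ 2 = 1 + rad v ^ 2 := by
  rw [sq_rad]
  exact Real.sq_sqrt (by positivity)

theorem rad_le_vzero (v : Fin 3 → ℝ) : rad v ≤ vzero v :=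
  Real.sqrt_le_sqrt (by linarith)

theorem hrho_eq_sqrt (t : ℝ) (x : Fin 3 → ℝ) : hrho t x = √(t ^ 2 - rad x ^ 2) := by
  rw [hrho, sq_rad]

section FutureOfUnitHyperboloid

variable {t : ℝ} {x : Fin 3 → ℝ}

theorem rad_le_of_sqrt_one_add_le (h : √(1 + ∑ i, x i ^ 2) ≤ t) : rad x ≤ t :=
  (Real.sqrt_le_sqrt (by linarith)).trans h

theorem one_le_hrho_of_sqrt_one_add_le (h : √(1 + ∑ i, x i ^ 2) ≤ t) : 1 ≤ hrho t x := by
  have h1 : 1 + ∑ i, x i ^ 2 ≤ t ^ 2 := (Real.sqrt_le_left (Real.sqrt_nonneg _ |>.trans h)).1 h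
  exact Real.one_le_sqrt.2 (by linarith)

end FutureOfUnitHyperboloid

theorem div_hrho_le_vrho {t : ℝ} {x : Fin 3 → ℝ} (v : Fin 3 → ℝ) (hρ : 0 < hrho t x) :
    (t * vzero v - rad x * rad v) / hrho t x ≤ vrho t x v := by
  unfold vrho
  gcongr
  exact Real.sum_mul_le_sqrt_mul_sqrt univ x v

/-- Lemma 6.2: in `J⁺(H₁)` one has `v^ρ ≥ 1`, `v^ρ ≥ (u/(2ρ))v⁰`, and `v^ρ ≥ t/(2ρv⁰)`,
where `u = t − |x|`. -/
theorem vrho_lower_bounds (t : ℝ) (x v : Fin 3 → ℝ)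
    (h : Real.sqrt (1 + ∑ i, (x i) ^ 2) ≤ t) :
    1 ≤ vrho t x v ∧
    (t - rad x) / (2 * hrho t x) * vzero v ≤ vrho t x v ∧
    t / (2 * hrho t x * vzero v) ≤ vrho t x v := by
  have hrt := rad_le_of_sqrt_one_add_le h
  have hρ : 0 < hrho t x := zero_lt_one.trans_le (one_le_hrho_of_sqrt_one_add_le h)
  have hr : 0 ≤ rad x := Real.sqrt_nonneg _
  have hw : 0 ≤ rad v := Real.sqrt_nonneg _
  have hws := rad_le_vzero v
  have hs : 0 < vzero v := Real.sqrt_pos.2 (by positivity)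
  refine ⟨?_, ?_, ?_⟩ <;> refine le_trans ?_ (div_hrho_le_vrho v hρ)
  · have := Real.sqrt_sq_sub_sq_mul_sqrt_sq_sub_sq_le hr hrt hw hws
    rw [sq_vzero, add_sub_cancel_right, Real.sqrt_one, mul_one, ← hrho_eq_sqrt] at this
    rwa [le_div_iff₀ hρ, one_mul]
  · calc (t - rad x) / (2 * hrho t x) * vzero v = (t - rad x) * vzero v / 2 / hrho t x := by ring
      _ ≤ _ := by
        gcongr
        nlinarith [mul_le_mul_of_nonneg_left hws hr, mul_nonneg (sub_nonneg.2 hrt) hs.le]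
  · calc t / (2 * hrho t x * vzero v) = t / (2 * vzero v) / hrho t x := by ring
      _ ≤ _ := by
        gcongr
        rw [div_le_iff₀ (by positivity), mul_comm]
        exact le_two_mul_mul_sub_mul_of_sq_eq_one_add_sq hr hrt hw hs.le (sq_vzero v)
end
end

section
/- Integral estimate on hyperboloids (Lemma B.1): let n, m, p, r be nonnegative integers with p − n + r < −1 and m > r. Then there exists a constant C = C(n,m,p,r) such that for every real ρ ≥ 1: ∫_0^∞ s^p / ( (1 + √(ρ² + s²) − s)^m · (ρ² + s²)^{n/2} ) ds ≤ C · ρ^{p+1−n−r}. -/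
/-!
With `T = √(ρ² + s²)` one has `T - s = ρ² / (T + s) ≥ ρ² / (2T)`, and the weight `1 + T - s` is
at least `1`, so `(1 + T - s)^m ≥ (ρ² / (2T))^r` when `r ≤ m`. This trades the weight for the
factor `2^r ρ^{-2r} T^r`, leaving `s^p (ρ² + s²)^{(r-n)/2}`, which is homogeneous of degree
`p + r - n` in `(ρ, s)`. The substitution `s = ρu` turns its integral into
`ρ^{p+r-n+1} ∫₀^∞ u^p (1 + u²)^{(r-n)/2} du`, finite because `p + r - n < -1`.
-/

open MeasureTheory Set Real

theorem sq_div_two_mul_sqrt_le_sqrt_sub (ρ s : ℝ) :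
    ρ ^ 2 / (2 * √(ρ ^ 2 + s ^ 2)) ≤ √(ρ ^ 2 + s ^ 2) - s := by
  have hT2 : √(ρ ^ 2 + s ^ 2) ^ 2 = ρ ^ 2 + s ^ 2 := sq_sqrt (by positivity)
  rcases (sqrt_nonneg (ρ ^ 2 + s ^ 2)).eq_or_lt with hT | hT
  · rw [← hT] at hT2 ⊢
    have : s = 0 := by nlinarith
    simp [this]
  · rw [div_le_iff₀ (by positivity)]
    -- `2 T (T - s) - ρ² = (T - s)²` because `T² = ρ² + s²`
    nlinarith [sq_nonneg (√(ρ ^ 2 + s ^ 2) - s)]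

theorem sq_div_two_mul_sqrt_pow_le_one_add_sqrt_sub_pow {r m : ℕ} (h : r ≤ m) (ρ s : ℝ) :
    (ρ ^ 2 / (2 * √(ρ ^ 2 + s ^ 2))) ^ r ≤ (1 + √(ρ ^ 2 + s ^ 2) - s) ^ m := by
  have hbound := sq_div_two_mul_sqrt_le_sqrt_sub ρ s
  have hnonneg : 0 ≤ ρ ^ 2 / (2 * √(ρ ^ 2 + s ^ 2)) := by positivity
  calc (ρ ^ 2 / (2 * √(ρ ^ 2 + s ^ 2))) ^ r
      ≤ (1 + √(ρ ^ 2 + s ^ 2) - s) ^ r := pow_le_pow_left₀ hnonneg (by linarith) r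
    _ ≤ (1 + √(ρ ^ 2 + s ^ 2) - s) ^ m := pow_le_pow_right₀ (by linarith) h

theorem pow_div_one_add_sqrt_sub_pow_mul_rpow_le {r m : ℕ} (h : r ≤ m) (p n : ℕ) {ρ s : ℝ}
    (hρ : 0 < ρ) (hs : 0 ≤ s) :
    s ^ p / ((1 + √(ρ ^ 2 + s ^ 2) - s) ^ m * (ρ ^ 2 + s ^ 2) ^ ((n : ℝ) / 2))
      ≤ 2 ^ r / ρ ^ (2 * r) * (s ^ p * (ρ ^ 2 + s ^ 2) ^ (((r : ℝ) - n) / 2)) := by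
  have hA : 0 < ρ ^ 2 + s ^ 2 := by positivity
  have hrpow (k : ℕ) : (ρ ^ 2 + s ^ 2) ^ ((k : ℝ) / 2) = √(ρ ^ 2 + s ^ 2) ^ k := by
    rw [sqrt_eq_rpow, ← rpow_mul_natCast hA.le]
    ring_nf
  calc s ^ p / ((1 + √(ρ ^ 2 + s ^ 2) - s) ^ m * (ρ ^ 2 + s ^ 2) ^ ((n : ℝ) / 2))
      ≤ s ^ p / ((ρ ^ 2 / (2 * √(ρ ^ 2 + s ^ 2))) ^ r * (ρ ^ 2 + s ^ 2) ^ ((n : ℝ) / 2)) := by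
        gcongr
        exact sq_div_two_mul_sqrt_pow_le_one_add_sqrt_sub_pow h ρ s
    _ = 2 ^ r / ρ ^ (2 * r) * (s ^ p * (ρ ^ 2 + s ^ 2) ^ (((r : ℝ) - n) / 2)) := by
        rw [sub_div, rpow_sub hA, hrpow, hrpow, div_pow, mul_pow, pow_mul]
        field_simp

theorem integrable_pow_mul_one_add_sq_rpow {p : ℕ} {a : ℝ} (h : p + 2 * a < -1) :
    Integrable fun u : ℝ ↦ u ^ p * (1 + u ^ 2) ^ a := by
  have hdom : Integrable fun u : ℝ ↦ (1 + ‖u‖ ^ 2) ^ ((p + 2 * a) / 2) := by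
    simpa using integrable_rpow_neg_one_add_norm_sq (E := ℝ) (μ := volume) (r := -(p + 2 * a))
      (by simp only [Module.finrank_self, Nat.cast_one]; linarith)
  refine hdom.mono' (by fun_prop) (Filter.Eventually.of_forall fun u ↦ ?_)
  have h1 : 0 < 1 + u ^ 2 := by positivity
  have hu : |u| ^ p ≤ (1 + u ^ 2) ^ ((p : ℝ) / 2) := by
    rw [show (p : ℝ) / 2 = 1 / 2 * p by ring, rpow_mul_natCast h1.le, ← sqrt_eq_rpow,
      ← sqrt_sq_eq_abs]
    gcongr
    linarith
  calc ‖u ^ p * (1 + u ^ 2) ^ a‖ = |u| ^ p * (1 + u ^ 2) ^ a := by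
        rw [norm_mul, norm_pow, Real.norm_eq_abs, norm_of_nonneg (rpow_nonneg h1.le a)]
    _ ≤ (1 + u ^ 2) ^ ((p : ℝ) / 2) * (1 + u ^ 2) ^ a := by gcongr
    _ = (1 + ‖u‖ ^ 2) ^ ((p + 2 * a) / 2) := by
        rw [← rpow_add h1, norm_eq_abs, sq_abs]
        ring_nf

theorem pow_mul_sq_add_sq_rpow_eq (p : ℕ) (a : ℝ) {ρ : ℝ} (hρ : 0 < ρ) (s : ℝ) :
    s ^ p * (ρ ^ 2 + s ^ 2) ^ a
      = ρ ^ ((p : ℝ) + 2 * a) * ((ρ⁻¹ * s) ^ p * (1 + (ρ⁻¹ * s) ^ 2) ^ a) := by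
  have hsum : ρ ^ 2 + s ^ 2 = ρ ^ 2 * (1 + (ρ⁻¹ * s) ^ 2) := by field_simp
  rw [hsum, mul_rpow (by positivity) (by positivity), rpow_add hρ, rpow_natCast,
    rpow_mul hρ.le, rpow_two]
  field_simp
  rw [div_pow]
  field_simp

theorem integrableOn_Ioi_pow_mul_sq_add_sq_rpow {p : ℕ} {a : ℝ} (h : p + 2 * a < -1) {ρ : ℝ}
    (hρ : 0 < ρ) : IntegrableOn (fun s : ℝ ↦ s ^ p * (ρ ^ 2 + s ^ 2) ^ a) (Ioi 0) := by
  simp_rw [pow_mul_sq_add_sq_rpow_eq p a hρ]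
  refine Integrable.const_mul ?_ _
  have hg : IntegrableOn (fun u : ℝ ↦ u ^ p * (1 + u ^ 2) ^ a) (Ioi (ρ⁻¹ * 0)) := by
    rw [mul_zero]
    exact (integrable_pow_mul_one_add_sq_rpow h).integrableOn
  exact (integrableOn_Ioi_comp_mul_left_iff _ 0 (inv_pos.mpr hρ)).mpr hg

theorem integral_Ioi_pow_mul_sq_add_sq_rpow (p : ℕ) (a : ℝ) {ρ : ℝ} (hρ : 0 < ρ) :
    ∫ s in Ioi 0, s ^ p * (ρ ^ 2 + s ^ 2) ^ a
      = ρ ^ ((p : ℝ) + 2 * a + 1) * ∫ u in Ioi 0, u ^ p * (1 + u ^ 2) ^ a := by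
  simp_rw [pow_mul_sq_add_sq_rpow_eq p a hρ]
  rw [integral_const_mul, integral_comp_mul_left_Ioi (fun u ↦ u ^ p * (1 + u ^ 2) ^ a) 0
    (inv_pos.mpr hρ), rpow_add_one hρ.ne']
  simp [smul_eq_mul, mul_assoc]

/-- Lemma B.1 (integral estimate on hyperboloids): for nonnegative integers `n, m, p, r`
with `p − n + r < −1` and `m > r`, there is a constant `C = C(n,m,p,r)` such that for all
`ρ ≥ 1`, `∫_0^∞ s^p / ((1 + √(ρ²+s²) − s)^m (ρ²+s²)^{n/2}) ds ≤ C ρ^{p+1−n−r}`. -/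
theorem hyperboloid_integral_estimate
    (n m p r : ℕ) (h1 : (p : ℤ) - (n : ℤ) + (r : ℤ) < -1) (h2 : r < m) :
    ∃ C : ℝ, ∀ ρ : ℝ, 1 ≤ ρ →
      (∫ s in Set.Ioi (0 : ℝ),
          s ^ p / ((1 + Real.sqrt (ρ ^ 2 + s ^ 2) - s) ^ m
            * (ρ ^ 2 + s ^ 2) ^ ((n : ℝ) / 2)))
        ≤ C * ρ ^ ((p : ℤ) + 1 - (n : ℤ) - (r : ℤ)) := by
  set a : ℝ := ((r : ℝ) - n) / 2
  have ha : p + 2 * a < -1 := by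
    have : (p - n + r : ℝ) < -1 := by exact_mod_cast h1
    simp only [a]
    linarith
  refine ⟨2 ^ r * ∫ u in Ioi 0, u ^ p * (1 + u ^ 2) ^ a, fun ρ hρ ↦ ?_⟩
  have hρ0 : 0 < ρ := one_pos.trans_le hρ
  have hexp : ρ ^ ((p : ℝ) + 2 * a + 1)
      = ρ ^ (2 * r) * ρ ^ ((p : ℤ) + 1 - (n : ℤ) - (r : ℤ)) := by
    rw [← rpow_natCast, ← rpow_intCast, ← rpow_add hρ0]
    simp only [a]
    push_cast
    ring_nf
  calc (∫ s in Ioi 0,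
        s ^ p / ((1 + √(ρ ^ 2 + s ^ 2) - s) ^ m * (ρ ^ 2 + s ^ 2) ^ ((n : ℝ) / 2)))
      ≤ ∫ s in Ioi 0, 2 ^ r / ρ ^ (2 * r) * (s ^ p * (ρ ^ 2 + s ^ 2) ^ a) := by
        refine setIntegral_mono_of_nonneg (fun s hs ↦ ?_)
          (fun s hs ↦ pow_div_one_add_sqrt_sub_pow_mul_rpow_le h2.le p n hρ0 (le_of_lt hs))
          ((integrableOn_Ioi_pow_mul_sq_add_sq_rpow ha hρ0).const_mul _)
        have hsT : s ≤ √(ρ ^ 2 + s ^ 2) := le_sqrt_of_sq_le (le_add_of_nonneg_left (sq_nonneg ρ))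
        have hs0 : 0 ≤ s := le_of_lt hs
        exact div_nonneg (by positivity)
          (mul_nonneg (pow_nonneg (by linarith) m) (rpow_nonneg (by positivity) _))
    _ = 2 ^ r / ρ ^ (2 * r) * ρ ^ ((p : ℝ) + 2 * a + 1)
          * ∫ u in Ioi 0, u ^ p * (1 + u ^ 2) ^ a := by
        rw [integral_const_mul, integral_Ioi_pow_mul_sq_add_sq_rpow p a hρ0, mul_assoc]
    _ = _ := by
        rw [hexp]
        field_simp
end
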